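/- Let K ⊂ ℝ^N be a convex body symmetric with respect to the origin (K = −K) and let G ⊂ ℝ^N be a bounded measurable set with positive Lebesgue measure which is uniformly K-dense and centrally symmetric (there exists z ∈ ℝ^N with 2z − Ḡ = Ḡ). Then G equals K up to a homothety: there exist λ > 0 and x₀ ∈ ℝ^N such that Ḡ = x₀ + λK. -/

import Mathlib

/-!
Write `ρ(x)` for the smallest `r` with `Ḡ ⊆ x + rK`. Uniform density makes every boundary point
of `G` a point of the measure-theoretic support of `G` (one boundary point is, by connectedness,
and the density at all others is the same), so `Ḡ` is that support. Then `ρ` is constant on `∂G`: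
if `Ḡ ⊆ x' + rK` then `G \ (x + rK)` is null, so no support point lies outside `x + rK`.

For a boundary point `x`, the reflected point `2z - x` is also on the boundary, whence
`2‖x - z‖_K ≤ ρ`, while the triangle inequality gives `ρ ≤ ρ(z) + ‖x - z‖_K`. A point of `Ḡ`
farthest from `z` lies on the boundary, so `ρ(z) ≤ ρ/2` and the boundary of `Ḡ` lies on the
boundary of `W = z + ρ(z)K ⊇ Ḡ`. Since `∂W` is null, `Ḡ` meets the connected open set `int W`
without its boundary crossing it, so `int W ⊆ Ḡ` and `Ḡ = W`.
-/

open MeasureTheory Set Pointwise Filter Topology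

section Gauge

variable {E : Type*} [NormedAddCommGroup E] [NormedSpace ℝ E] {K C : Set E} {x y v : E} {r : ℝ}

theorem mem_vadd_smul_set_iff (hr : r ≠ 0) : v ∈ x +ᵥ r • K ↔ r⁻¹ • (v - x) ∈ K := by
  rw [mem_vadd_set_iff_neg_vadd_mem, vadd_eq_add, neg_add_eq_sub,
    mem_smul_set_iff_inv_smul_mem₀ hr]

theorem mem_vadd_smul_iff_gauge_le (hK : Convex ℝ K) (hKc : IsClosed K) (hK0 : K ∈ 𝓝 0)
    (hr : 0 < r) : v ∈ x +ᵥ r • K ↔ gauge K (v - x) ≤ r := by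
  have hmem := gauge_le_one_iff_mem_closure hK hK0 (x := r⁻¹ • (v - x))
  rw [hKc.closure_eq, gauge_smul_of_nonneg (inv_nonneg.2 hr.le), smul_eq_mul,
    inv_mul_le_one₀ hr] at hmem
  rw [mem_vadd_smul_set_iff hr.ne', hmem]

theorem mem_interior_vadd_smul_iff_gauge_lt (hK : Convex ℝ K) (hK0 : K ∈ 𝓝 0) (hr : 0 < r) :
    v ∈ interior (x +ᵥ r • K) ↔ gauge K (v - x) < r := by
  rw [interior_vadd, interior_smul₀ hr.ne', mem_vadd_smul_set_iff hr.ne',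
    ← gauge_lt_one_iff_mem_interior hK hK0,
    gauge_smul_of_nonneg (inv_nonneg.2 hr.le), smul_eq_mul, inv_mul_lt_one₀ hr]

theorem hasBasis_nhds_vadd_smul (hK0 : K ∈ 𝓝 0) (hKb : Bornology.IsBounded K) (x : E) :
    (𝓝 x).HasBasis (fun r : ℝ => 0 < r) (fun r => x +ᵥ r • K) := by
  rw [← map_add_left_nhds_zero]
  simp_rw [← image_vadd]
  refine HasBasis.map _ ((𝓝 (0 : E)).basis_sets.to_hasBasis (fun U hU => ?_)
    fun r hr => ⟨r • K, (set_smul_mem_nhds_zero_iff hr.ne').2 hK0, le_rfl⟩)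
  obtain ⟨a, ha, hKa⟩ := ((NormedSpace.isVonNBounded_iff ℝ).2 hKb hU).exists_pos
  refine ⟨a⁻¹, inv_pos.2 ha, (smul_set_subset_iff₀ (inv_ne_zero ha.ne')).2 ?_⟩
  rw [inv_inv]
  exact hKa a (by rw [Real.norm_of_nonneg ha.le])

noncomputable def gaugeRadius (K C : Set E) (x : E) : ℝ :=
  sSup ((fun y => gauge K (y - x)) '' C)

theorem isCompact_image_gauge_sub (hK : Convex ℝ K) (hK0 : K ∈ 𝓝 0) (hC : IsCompact C) (x : E) :
    IsCompact ((fun y => gauge K (y - x)) '' C) :=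
  hC.image ((continuous_gauge hK hK0).comp (continuous_sub_right x))

theorem gauge_sub_le_gaugeRadius (hK : Convex ℝ K) (hK0 : K ∈ 𝓝 0) (hC : IsCompact C)
    (hy : y ∈ C) : gauge K (y - x) ≤ gaugeRadius K C x :=
  le_csSup (isCompact_image_gauge_sub hK hK0 hC x).bddAbove (mem_image_of_mem _ hy)

theorem gaugeRadius_le_iff (hK : Convex ℝ K) (hK0 : K ∈ 𝓝 0) (hC : IsCompact C)
    (hCne : C.Nonempty) : gaugeRadius K C x ≤ r ↔ ∀ y ∈ C, gauge K (y - x) ≤ r :=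
  (csSup_le_iff (isCompact_image_gauge_sub hK hK0 hC x).bddAbove (hCne.image _)).trans
    forall_mem_image

theorem exists_gauge_sub_eq_gaugeRadius (hK : Convex ℝ K) (hK0 : K ∈ 𝓝 0) (hC : IsCompact C)
    (hCne : C.Nonempty) (x : E) : ∃ y ∈ C, gauge K (y - x) = gaugeRadius K C x :=
  (isCompact_image_gauge_sub hK hK0 hC x).sSup_mem (hCne.image _)

theorem gaugeRadius_nonneg (hK : Convex ℝ K) (hK0 : K ∈ 𝓝 0) (hC : IsCompact C) (hx : x ∈ C) :
    0 ≤ gaugeRadius K C x := by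
  simpa using gauge_sub_le_gaugeRadius hK hK0 hC hx (x := x)

theorem subset_vadd_smul_iff_gaugeRadius_le (hK : Convex ℝ K) (hKc : IsClosed K)
    (hK0 : K ∈ 𝓝 0) (hC : IsCompact C) (hCne : C.Nonempty) (hr : 0 < r) :
    C ⊆ x +ᵥ r • K ↔ gaugeRadius K C x ≤ r := by
  simp_rw [gaugeRadius_le_iff hK hK0 hC hCne, ← mem_vadd_smul_iff_gauge_le hK hKc hK0 hr]
  rfl

theorem gaugeRadius_le_add_gauge (hK : Convex ℝ K) (hK0 : K ∈ 𝓝 0) (hC : IsCompact C)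
    (hCne : C.Nonempty) (x z : E) : gaugeRadius K C x ≤ gaugeRadius K C z + gauge K (z - x) := by
  refine (gaugeRadius_le_iff hK hK0 hC hCne).2 fun y hy => ?_
  calc gauge K (y - x) = gauge K ((y - z) + (z - x)) := by rw [sub_add_sub_cancel]
    _ ≤ gauge K (y - z) + gauge K (z - x) := gauge_add_le hK (absorbent_nhds_zero hK0) _ _
    _ ≤ gaugeRadius K C z + gauge K (z - x) := by
        gcongr; exact gauge_sub_le_gaugeRadius hK hK0 hC hy

theorem exists_mem_frontier_gauge_sub_eq_gaugeRadius (hK : Convex ℝ K) (hKc : IsClosed K)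
    (hK0 : K ∈ 𝓝 0) (hC : IsCompact C) (hCne : C.Nonempty) (hpos : 0 < gaugeRadius K C x) :
    ∃ y ∈ frontier C, gauge K (y - x) = gaugeRadius K C x := by
  obtain ⟨y, hyC, hy⟩ := exists_gauge_sub_eq_gaugeRadius hK hK0 hC hCne x
  refine ⟨y, hC.isClosed.frontier_eq ▸ ⟨hyC, fun hyi => ?_⟩, hy⟩
  have hsub := (subset_vadd_smul_iff_gaugeRadius_le hK hKc hK0 hC hCne hpos).2 le_rfl
  have := (mem_interior_vadd_smul_iff_gauge_lt hK hK0 hpos).1 (interior_mono hsub hyi)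
  exact this.ne hy

theorem gaugeRadius_pos (hK : Convex ℝ K) (hKb : Bornology.IsBounded K) (hK0 : K ∈ 𝓝 0)
    (hC : IsCompact C) (hCnt : C.Nontrivial) (x : E) : 0 < gaugeRadius K C x := by
  obtain ⟨y, hy, hyx⟩ := hCnt.exists_ne x
  refine lt_of_lt_of_le ?_ (gauge_sub_le_gaugeRadius hK hK0 hC hy)
  exact (gauge_pos (absorbent_nhds_zero hK0) ((NormedSpace.isVonNBounded_iff ℝ).2 hKb)).2
    (sub_ne_zero.2 hyx)

end Gauge

section Topology
variable {X : Type*} [TopologicalSpace X] {C S U G : Set X}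

theorem IsClosed.mem_interior_of_notMem_frontier (hC : IsClosed C) {x : X} (hx : x ∈ C)
    (hfr : x ∉ frontier C) : x ∈ interior C := by
  rw [← closure_sdiff_frontier, hC.closure_eq]
  exact ⟨hx, hfr⟩

theorem IsPreconnected.subset_of_disjoint_frontier (hU : IsPreconnected U)
    (hC : IsClosed C) (hne : (U ∩ C).Nonempty) (hfr : Disjoint U (frontier C)) : U ⊆ C := by
  have hint : ∀ x ∈ U, x ∈ C → x ∈ interior C := fun x hxU hxC =>
    hC.mem_interior_of_notMem_frontier hxC (hfr.notMem_of_mem_left hxU)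
  obtain ⟨x, hxU, hxC⟩ := hne
  refine (hU.subset_of_closure_inter_subset isOpen_interior ⟨x, hxU, hint x hxU hxC⟩ ?_).trans
    interior_subset
  rintro y ⟨hyC, hyU⟩
  exact hint y hyU (closure_minimal interior_subset hC hyC)

theorem frontier_subset_frontier_of_interior_subset (hS : IsClosed S) (hGS : interior G ⊆ S)
    (hSG : S ⊆ closure G) : frontier S ⊆ frontier G := by
  rw [hS.frontier_eq]
  exact fun x hx => ⟨hSG hx.1, fun hxG => hx.2 (interior_maximal hGS isOpen_interior hxG)⟩

end Topology

theorem measure_sdiff_eq_of_measure_inter_eq {α : Type*} [MeasurableSpace α] {μ : Measure α}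
    {s t t' : Set α} (hs : μ s ≠ ⊤) (ht : MeasurableSet t) (ht' : MeasurableSet t')
    (h : μ (s ∩ t) = μ (s ∩ t')) : μ (s \ t) = μ (s \ t') := by
  have hsum := measure_inter_add_sdiff (μ := μ) s ht
  rw [h, ← measure_inter_add_sdiff s ht'] at hsum
  exact (ENNReal.add_right_inj (ne_top_of_le_ne_top hs (measure_mono inter_subset_left))).1 hsum

section UniformDensity

variable {E : Type*} [NormedAddCommGroup E] [NormedSpace ℝ E] [MeasurableSpace E]
  {μ : Measure E} {K G : Set E} {x x' : E}

def IsUniformlyDense (μ : Measure E) (K G : Set E) : Prop :=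
  ∀ r : ℝ, 0 < r → ∀ x ∈ frontier G, ∀ y ∈ frontier G,
    μ (G ∩ (x +ᵥ r • K)) = μ (G ∩ (y +ᵥ r • K))

theorem mem_support_restrict_iff_vadd_smul (hK0 : K ∈ 𝓝 0) (hKb : Bornology.IsBounded K)
    (hG : MeasurableSet G) :
    x ∈ (μ.restrict G).support ↔ ∀ r : ℝ, 0 < r → 0 < μ (G ∩ (x +ᵥ r • K)) := by
  simp_rw [(hasBasis_nhds_vadd_smul hK0 hKb x).mem_measureSupport, Measure.restrict_apply' hG,
    inter_comm]

variable [BorelSpace E] [FiniteDimensional ℝ E]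

theorem IsUniformlyDense.closure_eq_support [Nontrivial E] [μ.IsOpenPosMeasure]
    (hdense : IsUniformlyDense μ K G) (hK0 : K ∈ 𝓝 0) (hKb : Bornology.IsBounded K)
    (hG : MeasurableSet G) (hGb : Bornology.IsBounded G) (hGμ : 0 < μ G) :
    closure G = (μ.restrict G).support := by
  set S := (μ.restrict G).support
  have hSG : S ⊆ closure G := Measure.support_restrict_subset.trans inter_subset_left
  have hGS : interior G ⊆ S := fun x hx =>
    Measure.interior_inter_support ⟨hx, (Measure.support_eq_univ (μ := μ)) ▸ mem_univ x⟩
  have hSne : S.Nonempty :=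
    Measure.nonempty_support (by simpa [Measure.restrict_apply_univ] using hGμ.ne')
  have hSuniv : S ≠ univ := fun h =>
    NormedSpace.unbounded_univ ℝ E (h ▸ hGb.closure.subset hSG)
  obtain ⟨x₁, hx₁⟩ := nonempty_frontier_iff.2 ⟨hSne, hSuniv⟩
  have hx₁G : x₁ ∈ frontier G :=
    frontier_subset_frontier_of_interior_subset Measure.isClosed_support hGS hSG hx₁
  have hx₁S : x₁ ∈ S := Measure.isClosed_support.frontier_subset hx₁
  have hfrS : frontier G ⊆ S := fun x hx =>
    (mem_support_restrict_iff_vadd_smul hK0 hKb hG).2 fun r hr =>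
      hdense r hr x hx x₁ hx₁G ▸ (mem_support_restrict_iff_vadd_smul hK0 hKb hG).1 hx₁S r hr
  refine (hSG.antisymm ?_).symm
  rw [closure_eq_interior_union_frontier]
  exact union_subset hGS hfrS

theorem IsUniformlyDense.gaugeRadius_closure_le [Nontrivial E] [μ.IsOpenPosMeasure]
    [IsFiniteMeasureOnCompacts μ] (hdense : IsUniformlyDense μ K G) (hK : Convex ℝ K)
    (hKc : IsCompact K) (hK0 : K ∈ 𝓝 0) (hG : MeasurableSet G) (hGb : Bornology.IsBounded G)
    (hGμ : 0 < μ G) (hx : x ∈ frontier G) (hx' : x' ∈ frontier G) :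
    gaugeRadius K (closure G) x ≤ gaugeRadius K (closure G) x' := by
  have hC : IsCompact (closure G) := hGb.isCompact_closure
  have hCne : (closure G).Nonempty := ⟨x', frontier_subset_closure hx'⟩
  refine le_of_forall_gt_imp_ge_of_dense fun r hr => ?_
  have hr0 : 0 < r := (gaugeRadius_nonneg hK hK0 hC (frontier_subset_closure hx')).trans_lt hr
  have hball : ∀ y : E, IsClosed (y +ᵥ r • K) := fun y => ((hKc.smul r).vadd y).isClosed
  have hGx' : μ (G \ (x' +ᵥ r • K)) = 0 := by
    rw [sdiff_eq_empty.2 (subset_closure.trans ((subset_vadd_smul_iff_gaugeRadius_le hK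
      hKc.isClosed hK0 hC hCne hr0).2 hr.le)), measure_empty]
  have hGx : μ (G \ (x +ᵥ r • K)) = 0 := by
    rwa [measure_sdiff_eq_of_measure_inter_eq
      (ne_top_of_le_ne_top hC.measure_lt_top.ne (measure_mono subset_closure))
      (hball x).measurableSet (hball x').measurableSet (hdense r hr0 x hx x' hx')]
  refine (subset_vadd_smul_iff_gaugeRadius_le hK hKc.isClosed hK0 hC hCne hr0).1 ?_
  rw [hdense.closure_eq_support hK0 hKc.isBounded hG hGb hGμ, ← compl_subset_compl]
  refine Measure.subset_compl_support_of_isOpen (hball x).isOpen_compl ?_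
  rwa [Measure.restrict_apply' hG, ← sdiff_eq_compl_inter]

theorem IsUniformlyDense.gaugeRadius_closure_eq [Nontrivial E] [μ.IsOpenPosMeasure]
    [IsFiniteMeasureOnCompacts μ] (hdense : IsUniformlyDense μ K G) (hK : Convex ℝ K)
    (hKc : IsCompact K) (hK0 : K ∈ 𝓝 0) (hG : MeasurableSet G) (hGb : Bornology.IsBounded G)
    (hGμ : 0 < μ G) (hx : x ∈ frontier G) (hx' : x' ∈ frontier G) :
    gaugeRadius K (closure G) x = gaugeRadius K (closure G) x' :=
  (hdense.gaugeRadius_closure_le hK hKc hK0 hG hGb hGμ hx hx').antisymm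
    (hdense.gaugeRadius_closure_le hK hKc hK0 hG hGb hGμ hx' hx)

end UniformDensity

section CentralSymmetry

variable {E : Type*} [NormedAddCommGroup E] [NormedSpace ℝ E] {K C : Set E} {x z : E}

theorem gaugeRadius_le_gauge_sub_of_mem_frontier (hK : Convex ℝ K) (hKc : IsClosed K)
    (hK0 : K ∈ 𝓝 0) (hK_symm : ∀ v ∈ K, -v ∈ K) (hC : IsCompact C)
    (hC_symm : (fun y => (2 : ℝ) • z - y) '' C = C)
    (hρ : ∀ x ∈ frontier C, ∀ x' ∈ frontier C, gaugeRadius K C x = gaugeRadius K C x')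
    (hpos : 0 < gaugeRadius K C z) (hx : x ∈ frontier C) :
    gaugeRadius K C z ≤ gauge K (x - z) := by
  have hCne : C.Nonempty := ⟨x, hC.isClosed.frontier_subset hx⟩
  obtain ⟨y, hy, hyz⟩ := exists_mem_frontier_gauge_sub_eq_gaugeRadius hK hKc hK0 hC hCne hpos
  have hy' : (2 : ℝ) • z - y ∈ frontier C := by
    have h := (Homeomorph.subLeft ((2 : ℝ) • z)).image_frontier C
    rw [Homeomorph.coe_subLeft, hC_symm] at h
    exact h ▸ mem_image_of_mem _ hy
  have h2 : 2 * gauge K (y - z) ≤ gaugeRadius K C ((2 : ℝ) • z - y) := by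
    have h := gauge_sub_le_gaugeRadius hK hK0 hC (hC.isClosed.frontier_subset hy)
      (x := (2 : ℝ) • z - y)
    rwa [show y - ((2 : ℝ) • z - y) = (2 : ℝ) • (y - z) by module,
      gauge_smul_of_nonneg zero_le_two, smul_eq_mul] at h
  have h3 := gaugeRadius_le_add_gauge hK hK0 hC hCne x z
  rw [← neg_sub, gauge_neg hK_symm] at h3
  suffices 2 * gaugeRadius K C z ≤ gaugeRadius K C z + gauge K (x - z) by linarith
  calc 2 * gaugeRadius K C z = 2 * gauge K (y - z) := by rw [hyz]
    _ ≤ gaugeRadius K C ((2 : ℝ) • z - y) := h2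
    _ = gaugeRadius K C x := hρ _ hy' x hx
    _ ≤ gaugeRadius K C z + gauge K (x - z) := h3

theorem eq_vadd_gaugeRadius_smul [Nontrivial E] [MeasurableSpace E] [BorelSpace E]
    [FiniteDimensional ℝ E] (μ : Measure E) [μ.IsAddHaarMeasure] (hK : Convex ℝ K)
    (hKc : IsCompact K) (hK0 : K ∈ 𝓝 0)
    (hK_symm : ∀ v ∈ K, -v ∈ K) (hC : IsCompact C) (hCμ : 0 < μ C)
    (hC_symm : (fun y => (2 : ℝ) • z - y) '' C = C)
    (hρ : ∀ x ∈ frontier C, ∀ x' ∈ frontier C, gaugeRadius K C x = gaugeRadius K C x') :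
    0 < gaugeRadius K C z ∧ C = z +ᵥ gaugeRadius K C z • K := by
  have hCnt : C.Nontrivial := not_subsingleton_iff.1 fun h => hCμ.ne' (h.measure_zero μ)
  have hpos := gaugeRadius_pos hK hKc.isBounded hK0 hC hCnt z
  refine ⟨hpos, ?_⟩
  set W := z +ᵥ gaugeRadius K C z • K
  have hCW : C ⊆ W := (subset_vadd_smul_iff_gaugeRadius_le hK hKc.isClosed hK0 hC
    hCnt.nonempty hpos).2 le_rfl
  have hW : Convex ℝ W := (hK.smul _).vadd z
  have hzW : z ∈ interior W := (mem_interior_vadd_smul_iff_gauge_lt hK hK0 hpos).2 (by simpa)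
  have hdisj : Disjoint (interior W) (frontier C) := disjoint_left.2 fun x hxW hxC =>
    (gaugeRadius_le_gauge_sub_of_mem_frontier hK hKc.isClosed hK0 hK_symm hC hC_symm hρ hpos
      hxC).not_gt ((mem_interior_vadd_smul_iff_gauge_lt hK hK0 hpos).1 hxW)
  have hne : (interior W ∩ C).Nonempty := by
    have hμ : μ (C \ frontier W) ≠ 0 := by
      rw [measure_sdiff_null (hW.addHaar_frontier μ)]
      exact hCμ.ne'
    obtain ⟨x, hxC, hxW⟩ := nonempty_of_measure_ne_zero hμ
    exact ⟨x, closure_sdiff_frontier W ▸ ⟨subset_closure (hCW hxC), hxW⟩, hxC⟩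
  have hWC : interior W ⊆ C :=
    hW.interior.isPreconnected.subset_of_disjoint_frontier hC.isClosed hne hdisj
  refine hCW.antisymm ?_
  calc W = closure (interior W) := by
        rw [hW.closure_interior_eq_closure_of_nonempty_interior ⟨z, hzW⟩,
          ((hKc.smul _).vadd z).isClosed.closure_eq]
    _ ⊆ C := closure_minimal hWC hC.isClosed

end CentralSymmetry

/-- **Corollary 2.8.** Let `K ⊂ ℝ^N` be a convex body symmetric with respect to the origin
(hence containing the origin in its interior) and `G ⊂ ℝ^N` a bounded measurable set of
positive Lebesgue measure which is uniformly `K`-dense and centrally symmetric.  Then `G`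
equals `K` up to a homothety: `Ḡ = x₀ + λ K` for some `λ > 0` and `x₀ ∈ ℝ^N`. -/
theorem K_dense_centrally_symmetric_homothetic
    (N : ℕ) (K G : Set (EuclideanSpace ℝ (Fin N)))
    (hK_conv : Convex ℝ K) (hK_comp : IsCompact K)
    (hK0 : (0 : EuclideanSpace ℝ (Fin N)) ∈ interior K)
    (hK_symm : K = -K)
    (hG_meas : MeasurableSet G) (hG_bdd : Bornology.IsBounded G)
    (hG_pos : 0 < volume G)
    (hG_symm : ∃ z : EuclideanSpace ℝ (Fin N),
      (fun y => (2 : ℝ) • z - y) '' closure G = closure G)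
    (hdense : ∀ r : ℝ, 0 < r → ∀ x ∈ frontier G, ∀ y ∈ frontier G,
      volume (G ∩ (x +ᵥ r • K)) = volume (G ∩ (y +ᵥ r • K))) :
    ∃ lam : ℝ, 0 < lam ∧ ∃ x₀ : EuclideanSpace ℝ (Fin N),
      closure G = x₀ +ᵥ lam • K := by
  obtain ⟨z, hz⟩ := hG_symm
  rcases subsingleton_or_nontrivial (EuclideanSpace ℝ (Fin N)) with hE | hE
  · have hK1 : ((0 : EuclideanSpace ℝ (Fin N)) +ᵥ (1 : ℝ) • K).Nonempty :=
      ⟨0, by simpa using interior_subset hK0⟩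
    exact ⟨1, one_pos, 0, by
      rw [(nonempty_of_measure_ne_zero hG_pos.ne').closure.eq_univ, hK1.eq_univ]⟩
  have hK0' : K ∈ 𝓝 0 := mem_interior_iff_mem_nhds.1 hK0
  have hK_symm' : ∀ v ∈ K, -v ∈ K := fun v hv => by
    rw [hK_symm]
    exact neg_mem_neg.2 hv
  have hdense' : IsUniformlyDense volume K G := hdense
  have hρ : ∀ x ∈ frontier (closure G), ∀ x' ∈ frontier (closure G),
      gaugeRadius K (closure G) x = gaugeRadius K (closure G) x' := fun x hx x' hx' =>
    hdense'.gaugeRadius_closure_eq hK_conv hK_comp hK0' hG_meas hG_bdd hG_pos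
      (frontier_closure_subset hx) (frontier_closure_subset hx')
  obtain ⟨hpos, hG⟩ := eq_vadd_gaugeRadius_smul volume hK_conv hK_comp hK0' hK_symm'
    hG_bdd.isCompact_closure (hG_pos.trans_le (measure_mono subset_closure)) hz hρ
  exact ⟨_, hpos, z, hG⟩
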